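/- arXiv:1106.4719 — 4 statements merged into one kernel-verified Lean document; each statement's English description precedes it below -/
import Mathlib

section
/- Every block associated with an inclusion-minimal separator S of a graph G is a full block; that is, if S is a minimal separator of G not properly containing any other minimal separator, then every connected component C of G − S satisfies N(C) = S. -/
open scoped Classical

/-- Data of a (finite) tree decomposition: an index type, a graph on it, and bags. -/
structure TDData (V : Type) where
  ι : Type
  fin : Fintype ι
  tree : SimpleGraph ι
  bag : ι → Finset V

/-- `D` is a tree decomposition of the graph `G`. -/
def IsGraphTD {V : Type} (G : SimpleGraph V) (D : TDData V) : Prop :=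
  D.tree.IsTree ∧
  (∀ v : V, ∃ t, v ∈ D.bag t) ∧
  (∀ u v : V, G.Adj u v → ∃ t, u ∈ D.bag t ∧ v ∈ D.bag t) ∧
  (∀ v : V, (D.tree.induce {t | v ∈ D.bag t}).Connected)

/-- `D` is a tree decomposition of the hypergraph with edge family `E`. -/
def IsHyperTD {V : Type} (E : Finset (Finset V)) (D : TDData V) : Prop :=
  D.tree.IsTree ∧
  (∀ v : V, ∃ t, v ∈ D.bag t) ∧
  (∀ e ∈ E, ∃ t, e ⊆ D.bag t) ∧
  (∀ v : V, (D.tree.induce {t | v ∈ D.bag t}).Connected)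

/-- A monotone width function. -/
def MonoWidth {V : Type} (f : Finset V → NNReal) : Prop :=
  ∀ X Y : Finset V, X ⊆ Y → f X ≤ f Y

/-- The `f`-width of a tree decomposition: the supremum of `f` over its bags. -/
noncomputable def tdWidth {V : Type} (f : Finset V → NNReal) (D : TDData V) : NNReal :=
  ⨆ t : D.ι, f (D.bag t)

/-- The `f`-tree-width of a graph. -/
noncomputable def ftw {V : Type} (G : SimpleGraph V) (f : Finset V → NNReal) : NNReal :=
  ⨅ D : {D : TDData V // IsGraphTD G D}, tdWidth f D.1

/-- The `f`-hypertree-width of a hypergraph. -/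
noncomputable def fhtw {V : Type} (E : Finset (Finset V)) (f : Finset V → NNReal) : NNReal :=
  ⨅ D : {D : TDData V // IsHyperTD E D}, tdWidth f D.1

/-- The `f`-clique-number of a graph. -/
noncomputable def fCliqueNum {V : Type} (G : SimpleGraph V) (f : Finset V → NNReal) : NNReal :=
  ⨆ Ω : {Ω : Finset V // G.IsClique (Ω : Set V)}, f Ω.1

/-- The Gaifman (primal) graph of a hypergraph. -/
def gaifman {V : Type} (E : Finset (Finset V)) : SimpleGraph V :=
  SimpleGraph.fromRel fun u v => ∃ e ∈ E, u ∈ e ∧ v ∈ e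

/-- A graph is chordal if every cycle of length at least 4 has a chord. -/
def IsChordal {V : Type} (G : SimpleGraph V) : Prop :=
  ∀ (v : V) (p : G.Walk v v), p.IsCycle → 4 ≤ p.length →
    ∃ u w : V, u ∈ p.support ∧ w ∈ p.support ∧ G.Adj u w ∧ s(u, w) ∉ p.edges

/-- `I` is a triangulation of `G`: a chordal supergraph on the same vertex set. -/
def IsTriangulation {V : Type} (G I : SimpleGraph V) : Prop :=
  G ≤ I ∧ IsChordal I

/-- `I` is a minimal triangulation of `G`. -/
def IsMinTriang {V : Type} (G I : SimpleGraph V) : Prop :=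
  IsTriangulation G I ∧ ∀ I' : SimpleGraph V, IsTriangulation G I' → I' ≤ I → I' = I

/-- A maximal clique of `G` (as a finset). -/
def IsMaxClique {V : Type} (G : SimpleGraph V) (Ω : Finset V) : Prop :=
  G.IsClique (Ω : Set V) ∧ ∀ Ω' : Finset V, G.IsClique (Ω' : Set V) → Ω ⊆ Ω' → Ω = Ω'

/-- A potential maximal clique: a maximal clique of some minimal triangulation. -/
def IsPMC {V : Type} (G : SimpleGraph V) (Ω : Finset V) : Prop :=
  ∃ I : SimpleGraph V, IsMinTriang G I ∧ IsMaxClique I Ω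

/-- `u` and `v` are joined by a walk avoiding `S`. -/
def ReachAvoid {V : Type} (G : SimpleGraph V) (S : Finset V) (u v : V) : Prop :=
  ∃ p : G.Walk u v, ∀ x ∈ p.support, x ∉ S

/-- `S` is a `u,v`-separator of `G`. -/
def IsUVSep {V : Type} (G : SimpleGraph V) (u v : V) (S : Finset V) : Prop :=
  u ∉ S ∧ v ∉ S ∧ ¬ ReachAvoid G S u v

/-- `S` is a minimal separator of `G`: a minimal `u,v`-separator for some
non-adjacent pair of distinct vertices `u,v`. -/
def IsMinSep {V : Type} (G : SimpleGraph V) (S : Finset V) : Prop :=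
  ∃ u v : V, u ≠ v ∧ ¬ G.Adj u v ∧ IsUVSep G u v S ∧ ∀ S' ⊂ S, ¬ IsUVSep G u v S'

/-- An inclusion-minimal separator: a minimal separator not properly containing
another minimal separator. -/
def IsInclMinSep {V : Type} (G : SimpleGraph V) (S : Finset V) : Prop :=
  IsMinSep G S ∧ ∀ S' : Finset V, IsMinSep G S' → S' ⊆ S → S' = S

/-- `C` is (the vertex set of) a connected component of `G - S`. -/
def IsCompAvoid {V : Type} (G : SimpleGraph V) (S C : Finset V) : Prop :=
  C.Nonempty ∧ (∀ x ∈ C, x ∉ S) ∧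
  (∀ x ∈ C, ∀ y ∈ C, ReachAvoid G S x y) ∧
  (∀ x ∈ C, ∀ y : V, y ∉ S → ReachAvoid G S x y → y ∈ C)

/-- The neighborhood of a set `C` of vertices, as a set. -/
def nbhdSet {V : Type} (G : SimpleGraph V) (C : Finset V) : Set V :=
  {v | v ∉ C ∧ ∃ u ∈ C, G.Adj u v}

/-- The neighborhood of a set `C` of vertices, as a finset. -/
noncomputable def nbhd {V : Type} [Fintype V] [DecidableEq V]
    (G : SimpleGraph V) (C : Finset V) : Finset V :=
  Finset.univ.filter fun v => v ∉ C ∧ ∃ u ∈ C, G.Adj u v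

/-- The realization `R(S,C)` of a block: the graph on `S ∪ C` induced from `G`
with `S` turned into a clique (viewed as a graph on `V` with no edges outside `S ∪ C`). -/
def real {V : Type} [DecidableEq V] (G : SimpleGraph V) (S C : Finset V) : SimpleGraph V :=
  SimpleGraph.fromRel fun u v =>
    (u ∈ S ∪ C ∧ v ∈ S ∪ C) ∧ (G.Adj u v ∨ (u ∈ S ∧ v ∈ S))

/-- The subgraph of `I` induced by a finset `W`, viewed as a graph on `V`. -/
def restrict {V : Type} (I : SimpleGraph V) (W : Finset V) : SimpleGraph V :=
  SimpleGraph.fromRel fun u v => u ∈ W ∧ v ∈ W ∧ I.Adj u v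

/-- `(S,C)` is a full block of `G`. -/
def FullBlock {V : Type} (G : SimpleGraph V) (S C : Finset V) : Prop :=
  IsMinSep G S ∧ IsCompAvoid G S C ∧ nbhdSet G C = (S : Set V)



lemma reachAvoid_symm {V : Type} {G : SimpleGraph V} {S : Finset V} {u v : V}
    (h : ReachAvoid G S u v) : ReachAvoid G S v u := by
  obtain ⟨p, hp⟩ := h
  exact ⟨p.reverse, fun x hx => hp x (by
    rwa [SimpleGraph.Walk.support_reverse, List.mem_reverse] at hx)⟩

/-- If `S` is a minimal `u,v`-separator, then every `s ∈ S` can reach `u`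
by a walk avoiding `S \ {s}`. -/
lemma lemA {V : Type} {G : SimpleGraph V} {u v : V} {S : Finset V}
    (hsep : IsUVSep G u v S) (hmin : ∀ S' ⊂ S, ¬ IsUVSep G u v S')
    {s : V} (hs : s ∈ S) : ReachAvoid G (S.erase s) s u := by
  classical
  have hss : S.erase s ⊂ S := Finset.erase_ssubset hs
  have h1 := hmin _ hss
  have hu : u ∉ S.erase s := fun h => hsep.1 (Finset.mem_of_mem_erase h)
  have hv : v ∉ S.erase s := fun h => hsep.2.1 (Finset.mem_of_mem_erase h)
  have hreach : ReachAvoid G (S.erase s) u v := by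
    by_contra h
    exact h1 ⟨hu, hv, h⟩
  obtain ⟨p, hp⟩ := hreach
  have hsmem : s ∈ p.support := by
    by_contra hsp
    refine hsep.2.2 ⟨p, fun x hx hxS => hp x hx (Finset.mem_erase.mpr ⟨?_, hxS⟩)⟩
    intro he
    exact hsp (by rw [← he]; exact hx)
  refine reachAvoid_symm ⟨p.takeUntil s hsmem, fun x hx => hp x ?_⟩
  exact p.support_takeUntil_subset hsmem hx

/-- every block associated with an inclusion-minimal separator is
a full block: each component `C` of `G - S` satisfies `N(C) = S`. -/
theorem stmt7 {V : Type} (G : SimpleGraph V) (S : Finset V)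
    (hS : IsInclMinSep G S) (C : Finset V) (hC : IsCompAvoid G S C) :
    nbhdSet G C = (S : Set V) := by
  classical
  obtain ⟨⟨u, v, huv, hadj, hsep, hmin⟩, hincl⟩ := hS
  obtain ⟨hCne, hCS, hCconn, hCcl⟩ := hC
  -- the neighborhood is contained in S
  have hNS : nbhdSet G C ⊆ (S : Set V) := by
    intro y hy
    obtain ⟨hyC, x, hxC, hadj'⟩ := hy
    by_contra hyS
    refine hyC (hCcl x hxC y hyS ⟨SimpleGraph.Walk.cons hadj' SimpleGraph.Walk.nil, ?_⟩)
    intro z hz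
    simp only [SimpleGraph.Walk.support_cons, SimpleGraph.Walk.support_nil,
      List.mem_cons, List.mem_singleton, List.not_mem_nil] at hz
    rcases hz with h1 | h1 | h1
    · rw [h1]; exact hCS x hxC
    · rw [h1]; exact hyS
    · exact absurd h1 (by simp)
  set T : Finset V := S.filter (· ∈ nbhdSet G C) with hT
  have hTS : T ⊆ S := Finset.filter_subset _ _
  have hTco : (T : Set V) = nbhdSet G C := by
    ext x
    simp only [hT, Finset.coe_filter, Set.mem_setOf_eq, Finset.mem_coe]
    exact ⟨fun h => h.2, fun h => ⟨hNS h, h⟩⟩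
  -- choose w ∉ C among u, v with the reach property
  have hwex : ∃ w : V, w ∉ C ∧ w ∉ S ∧ ∀ s ∈ S, ReachAvoid G (S.erase s) s w := by
    by_cases huC : u ∈ C
    · have hvC : v ∉ C := fun hvC => hsep.2.2 (hCconn u huC v hvC)
      have hsep' : IsUVSep G v u S := ⟨hsep.2.1, hsep.1, fun h => hsep.2.2 (reachAvoid_symm h)⟩
      have hmin' : ∀ S' ⊂ S, ¬ IsUVSep G v u S' := by
        intro S' hS' h
        exact hmin S' hS' ⟨h.2.1, h.1, fun hr => h.2.2 (reachAvoid_symm hr)⟩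
      exact ⟨v, hvC, hsep.2.1, fun s hs => lemA hsep' hmin' hs⟩
    · exact ⟨u, huC, hsep.1, fun s hs => lemA hsep hmin hs⟩
  obtain ⟨w, hwC, hwS, hwreach⟩ := hwex
  obtain ⟨c, hc⟩ := hCne
  have hcS : c ∉ S := hCS c hc
  have hcw : c ≠ w := fun h => hwC (h ▸ hc)
  have hadjcw : ¬ G.Adj c w := by
    intro h
    refine hwC (hCcl c hc w hwS ⟨SimpleGraph.Walk.cons h SimpleGraph.Walk.nil, ?_⟩)
    intro z hz
    simp only [SimpleGraph.Walk.support_cons, SimpleGraph.Walk.support_nil,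
      List.mem_cons, List.mem_singleton, List.not_mem_nil] at hz
    rcases hz with h1 | h1 | h1
    · rw [h1]; exact hcS
    · rw [h1]; exact hwS
    · exact absurd h1 (by simp)
  -- key: no walk from a vertex of C to w avoids T
  have key : ∀ (a b : V) (p : G.Walk a b), a ∈ C → (∀ x ∈ p.support, x ∉ T) → b ∈ C := by
    intro a b p
    induction p with
    | nil => intro ha _; exact ha
    | @cons a₁ b₁ w₁ h q ih =>
      intro ha hsup
      by_cases hbC : b₁ ∈ C
      · exact ih hbC (fun x hx => hsup x (by
          simp only [SimpleGraph.Walk.support_cons, List.mem_cons]; exact Or.inr hx))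
      · have hbN : b₁ ∈ nbhdSet G C := ⟨hbC, a₁, ha, h⟩
        have hbT : b₁ ∈ T := Finset.mem_filter.mpr ⟨hNS hbN, hbN⟩
        exact absurd hbT (hsup b₁ (by
          simp only [SimpleGraph.Walk.support_cons, List.mem_cons]
          exact Or.inr q.start_mem_support))
  have hcT : c ∉ T := fun h => hcS (hTS h)
  have hwT : w ∉ T := fun h => hwS (hTS h)
  have hTsep : IsUVSep G c w T := by
    refine ⟨hcT, hwT, fun ⟨p, hp⟩ => hwC (key c w p hc hp)⟩
  -- minimality of T
  have hTmin : ∀ T' ⊂ T, ¬ IsUVSep G c w T' := by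
    intro T' hT' hsep'
    obtain ⟨s, hsT, hsT'⟩ := Finset.exists_of_ssubset hT'
    have hsN : s ∈ nbhdSet G C := (Finset.mem_filter.mp hsT).2
    have hsS : s ∈ S := hTS hsT
    obtain ⟨hsC, x, hxC, hxs⟩ := hsN
    obtain ⟨q1, hq1⟩ := hCconn c hc x hxC
    obtain ⟨q3, hq3⟩ := hwreach s hsS
    have hT'sub : ∀ y ∈ T', y ∈ S.erase s := by
      intro y hy
      have hyT : y ∈ T := hT'.1 hy
      exact Finset.mem_erase.mpr ⟨fun he => hsT' (he ▸ hy), hTS hyT⟩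
    refine hsep'.2.2 ⟨q1.append (SimpleGraph.Walk.cons hxs q3), ?_⟩
    intro z hz hzT'
    rw [SimpleGraph.Walk.mem_support_append_iff] at hz
    rcases hz with hz | hz
    · exact hq1 z hz (hTS (hT'.1 hzT'))
    · simp only [SimpleGraph.Walk.support_cons, List.mem_cons] at hz
      rcases hz with rfl | hz
      · exact hq1 z (q1.end_mem_support) (hTS (hT'.1 hzT'))
      · exact hq3 z hz (hT'sub z hzT')
  have hTmS : IsMinSep G T := ⟨c, w, hcw, hadjcw, hTsep, hTmin⟩
  have hTeq : T = S := hincl T hTmS hTS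
  rw [← hTco, hTeq]
end

section
/- Every minimal separator of a minimal triangulation I of a graph G is also a minimal separator of G, i.e., Δ_I ⊆ Δ_G. -/
open scoped Classical

/-!
Minimal separators of a chordal graph are cliques. Let `S` be a minimal `u`-`v` separator of `I`
and suppose some `S' ⊂ S` already separates `u` from `v` in `G`; let `D` be the component of `u`
in `G - S'`. Deleting from `I` every edge between `D` and a vertex outside `D ∪ S'` keeps `G`
inside and keeps chordality: a chordless cycle of the smaller graph must have such a deleted edge
as an `I`-chord, so it passes through `S'` on both of its arcs between `D` and the outside, and
these two vertices of the clique `S'` give a chord. By minimality of `I` no edge was deleted, yet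
`S'` does not separate `u` from `v` in `I`, so a `u`-`v` path of `I - S'` leaves `D` along a
deleted edge.
-/

open SimpleGraph

namespace ReachAvoid

variable {V : Type} {G H : SimpleGraph V} {S : Finset V} {u v w : V}

theorem refl (hu : u ∉ S) : ReachAvoid G S u u := ⟨Walk.nil, by simpa using hu⟩

theorem symm (h : ReachAvoid G S u v) : ReachAvoid G S v u := by
  obtain ⟨p, hp⟩ := h
  exact ⟨p.reverse, fun x hx => hp x (by simpa using hx)⟩

theorem trans (h₁ : ReachAvoid G S u v) (h₂ : ReachAvoid G S v w) : ReachAvoid G S u w := by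
  obtain ⟨p, hp⟩ := h₁
  obtain ⟨q, hq⟩ := h₂
  refine ⟨p.append q, fun x hx => ?_⟩
  rcases Walk.mem_support_append_iff p q |>.mp hx with hx | hx
  exacts [hp x hx, hq x hx]

theorem right_notMem (h : ReachAvoid G S u v) : v ∉ S := by
  obtain ⟨p, hp⟩ := h
  exact hp v p.end_mem_support

theorem of_mem_support (p : G.Walk u v) (hp : ∀ x ∈ p.support, x ∉ S) (hw : w ∈ p.support) :
    ReachAvoid G S u w :=
  ⟨p.takeUntil w hw, fun x hx => hp x (p.support_takeUntil_subset_support hw hx)⟩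

theorem concat (h : ReachAvoid G S u v) (hvw : G.Adj v w) (hw : w ∉ S) : ReachAvoid G S u w := by
  obtain ⟨p, hp⟩ := h
  refine ⟨p.concat hvw, fun x hx => ?_⟩
  rw [Walk.support_concat, List.mem_append, List.mem_singleton] at hx
  rcases hx with hx | rfl
  exacts [hp x hx, hw]

theorem mono (hGH : G ≤ H) (h : ReachAvoid G S u v) : ReachAvoid H S u v := by
  obtain ⟨p, hp⟩ := h
  exact ⟨p.mapLe hGH, by simpa [Walk.support_mapLe_eq_support] using hp⟩

end ReachAvoid

namespace SimpleGraph.Walk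

variable {V : Type} {G : SimpleGraph V}

theorem two_le_length_of_not_adj {u v : V} (huv : u ≠ v) (hadj : ¬ G.Adj u v) (p : G.Walk u v) :
    2 ≤ p.length := by
  rcases p with _ | ⟨h, _ | ⟨h', q⟩⟩
  · exact absurd rfl huv
  · exact absurd h hadj
  · simp

theorem exists_shorter_of_adj_of_notMem_edges [DecidableEq V] :
    ∀ {x y a b : V} (p : G.Walk x y), a ∈ p.support → b ∈ p.support → G.Adj a b →
      s(a, b) ∉ p.edges → ∃ q : G.Walk x y, q.support ⊆ p.support ∧ q.length < p.length
  | _, _, _, _, nil, ha, hb, hab, _ => by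
    simp only [support_nil, List.mem_singleton] at ha hb
    exact absurd (ha.trans hb.symm) hab.ne
  | x, _, a, b, cons (v := x') h p, ha, hb, hab, he => by
    have shortcut : ∀ c, c ∈ p.support → G.Adj x c → c ≠ x' →
        ∃ q : G.Walk x _, q.support ⊆ (cons h p).support ∧ q.length < (cons h p).length :=
      fun c hc hxc hcx' => ⟨cons hxc (p.dropUntil c hc),
        List.cons_subset_cons _ (p.support_dropUntil_subset_support hc),
        by simpa using length_dropUntil_lt_length hc hcx'⟩
    rw [support_cons, List.mem_cons] at ha hb
    rw [edges_cons, List.mem_cons, not_or] at he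
    by_cases hp : a ∈ p.support ∧ b ∈ p.support
    · obtain ⟨q, hsub, hlt⟩ := exists_shorter_of_adj_of_notMem_edges p hp.1 hp.2 hab he.2
      exact ⟨cons h q, List.cons_subset_cons _ hsub, by simpa using hlt⟩
    rcases not_and_or.mp hp with hap | hbp
    · obtain rfl := ha.resolve_right hap
      exact shortcut b (hb.resolve_left hab.ne.symm) hab (by rintro rfl; exact he.1 rfl)
    · obtain rfl := hb.resolve_right hbp
      exact shortcut a (ha.resolve_left hab.ne) hab.symm
        (by rintro rfl; exact he.1 Sym2.eq_swap)

/-- A shortest walk inside a vertex set is a chordless path. -/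
theorem exists_isPath_isChordless {x y : V} {P : V → Prop}
    (h : ∃ p : G.Walk x y, ∀ z ∈ p.support, P z) :
    ∃ p : G.Walk x y, p.IsPath ∧ (∀ z ∈ p.support, P z) ∧ p.IsChordless := by
  classical
  have hex : ∃ n, ∃ p : G.Walk x y, (∀ z ∈ p.support, P z) ∧ p.length = n := by
    obtain ⟨p, hp⟩ := h
    exact ⟨_, p, hp, rfl⟩
  obtain ⟨p, hP, hlen⟩ := Nat.find_spec hex
  have hmin : ∀ q : G.Walk x y, (∀ z ∈ q.support, P z) → p.length ≤ q.length :=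
    fun q hq => hlen ▸ Nat.find_min' hex ⟨q, hq, rfl⟩
  refine ⟨p, ?_, hP, isChordless_iff_forall_mem_edges.mpr fun a b ha hb hab => ?_⟩
  · rw [← p.bypass_eq_self_of_length_le_length_bypass
      (hmin _ fun z hz => hP z (p.support_bypass_subset_support hz))]
    exact p.bypass_isPath
  · by_contra he
    obtain ⟨q, hsub, hlt⟩ := p.exists_shorter_of_adj_of_notMem_edges ha hb hab he
    exact (hmin q fun z hz => hP z (hsub hz)).not_gt hlt

theorem IsChordless.append {u v w : V} {p : G.Walk u v} {q : G.Walk v w}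
    (hp : p.IsChordless) (hq : q.IsChordless)
    (hpq : ∀ a ∈ p.support, ∀ b ∈ q.support, G.Adj a b → a ∈ q.support ∨ b ∈ p.support) :
    (p.append q).IsChordless := by
  have key : ∀ a b, a ∈ p.support → b ∈ q.support → G.Adj a b →
      s(a, b) ∈ (p.append q).edges := by
    intro a b ha hb hab
    rw [edges_append, List.mem_append]
    rcases hpq a ha b hb hab with haq | hbp
    exacts [Or.inr (hq.mem_edges haq hb hab), Or.inl (hp.mem_edges ha hbp hab)]
  refine isChordless_iff_forall_mem_edges.mpr fun a b ha hb hab => ?_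
  rw [mem_support_append_iff] at ha hb
  rcases ha with ha | ha <;> rcases hb with hb | hb
  · exact edges_append p q ▸ List.mem_append_left _ (hp.mem_edges ha hb hab)
  · exact key a b ha hb hab
  · exact Sym2.eq_swap ▸ key b a hb ha hab.symm
  · exact edges_append p q ▸ List.mem_append_right _ (hq.mem_edges ha hb hab)

theorem IsCycle.exists_append_of_mem_support [DecidableEq V] {v a b : V} {c : G.Walk v v}
    (hc : c.IsCycle) (ha : a ∈ c.support) (hb : b ∈ c.support) :
    ∃ (w₁ : G.Walk a b) (w₂ : G.Walk b a), (w₁.append w₂).IsCycle ∧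
      (∀ z, z ∈ (w₁.append w₂).support ↔ z ∈ c.support) ∧
      (∀ e, e ∈ (w₁.append w₂).edges ↔ e ∈ c.edges) := by
  have hb' : b ∈ (c.rotate a ha).support := (c.mem_support_rotate_iff a ha).mpr hb
  refine ⟨(c.rotate a ha).takeUntil b hb', (c.rotate a ha).dropUntil b hb', ?_, fun z => ?_,
    fun e => ?_⟩ <;> rw [take_spec]
  · exact hc.rotate ha
  · exact c.mem_support_rotate_iff a ha
  · exact (c.rotate_edges a ha).mem_iff

theorem IsCycle.ne_and_notMem_edges_of_mem_support_append {a b x y : V}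
    {w₁ : G.Walk a b} {w₂ : G.Walk b a} (hc : (w₁.append w₂).IsCycle)
    (hx : x ∈ w₁.support) (hy : y ∈ w₂.support)
    (hxa : x ≠ a) (hxb : x ≠ b) (hya : y ≠ a) (hyb : y ≠ b) :
    x ≠ y ∧ s(x, y) ∉ (w₁.append w₂).edges := by
  have hdisj := List.disjoint_of_nodup_append (tail_support_append w₁ w₂ ▸ hc.support_nodup)
  have hx' : x ∈ w₁.support.tail := (w₁.mem_support_iff.mp hx).resolve_left hxa
  have hy' : y ∈ w₂.support.tail := (w₂.mem_support_iff.mp hy).resolve_left hyb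
  refine ⟨fun hxy => hdisj hx' (hxy ▸ hy'), fun he => ?_⟩
  rw [edges_append, List.mem_append] at he
  rcases he with he | he
  · exact hdisj ((w₁.mem_support_iff.mp (w₁.snd_mem_support_of_mem_edges he)).resolve_left hya)
      hy'
  · exact hdisj hx'
      ((w₂.mem_support_iff.mp (w₂.fst_mem_support_of_mem_edges he)).resolve_left hxb)

end SimpleGraph.Walk

section Chordal

variable {V : Type}

theorem isChordal_iff {G : SimpleGraph V} :
    IsChordal G ↔ ∀ (v : V) (c : G.Walk v v), c.IsCycle → 4 ≤ c.length → ¬ c.IsChordless := by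
  simp only [IsChordal, Walk.isChordless_iff_forall_mem_edges]
  grind

theorem exists_walk_of_reachAvoid_erase {G : SimpleGraph V} {S : Finset V} {u v z : V}
    (hu : u ∉ S) (hsep : ¬ ReachAvoid G S u v) (hz : ReachAvoid G (S.erase z) u v) :
    ∃ q : G.Walk u z, ∀ w ∈ q.support, w = z ∨ ReachAvoid G S u w := by
  obtain ⟨p, hp⟩ := hz
  obtain ⟨d, hd, hd₁, hd₂⟩ :=
    p.exists_boundary_dart {w | ReachAvoid G S u w} (ReachAvoid.refl hu) hsep
  have hdz : d.snd = z := by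
    by_contra hne
    exact hd₂ (hd₁.concat d.adj fun hS => hp _ (p.dart_snd_mem_support_of_mem_darts hd)
      (Finset.mem_erase.mpr ⟨hne, hS⟩))
  obtain ⟨r, hr⟩ := hd₁
  refine ⟨(r.concat d.adj).copy rfl hdz, fun w hw => ?_⟩
  rw [Walk.support_copy, Walk.support_concat, List.mem_append, List.mem_singleton] at hw
  rcases hw with hw | rfl
  exacts [Or.inr (ReachAvoid.of_mem_support r hr hw), Or.inl hdz]

theorem exists_walk_through_reachAvoid {G : SimpleGraph V} {S : Finset V} {u v x y : V}
    (hu : u ∉ S) (hsep : ¬ ReachAvoid G S u v) (hmin : ∀ z ∈ S, ReachAvoid G (S.erase z) u v)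
    (hx : x ∈ S) (hy : y ∈ S) :
    ∃ p : G.Walk x y, ∀ w ∈ p.support, w = x ∨ w = y ∨ ReachAvoid G S u w := by
  obtain ⟨qx, hqx⟩ := exists_walk_of_reachAvoid_erase hu hsep (hmin x hx)
  obtain ⟨qy, hqy⟩ := exists_walk_of_reachAvoid_erase hu hsep (hmin y hy)
  refine ⟨qx.reverse.append qy, fun w hw => ?_⟩
  rw [Walk.mem_support_append_iff, Walk.support_reverse, List.mem_reverse] at hw
  rcases hw with hw | hw
  · exact (hqx w hw).elim Or.inl (Or.inr ∘ Or.inr)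
  · exact (hqy w hw).elim (Or.inr ∘ Or.inl) (Or.inr ∘ Or.inr)

/-- Dirac: two non-adjacent `x y ∈ S` would lie on a chordless cycle formed by shortest
`x`-`y` paths through the components of `u` and of `v`. -/
theorem IsMinSep.isClique_of_isChordal {G : SimpleGraph V} (hG : IsChordal G) {S : Finset V}
    (hS : IsMinSep G S) : G.IsClique (S : Set V) := by
  obtain ⟨u, v, -, -, ⟨hu, hv, hsep⟩, hmin⟩ := hS
  have hmin' : ∀ z ∈ S, ReachAvoid G (S.erase z) u v := fun z hz => by
    by_contra h
    exact hmin _ (S.erase_ssubset hz)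
      ⟨fun h' => hu (S.mem_of_mem_erase h'), fun h' => hv (S.mem_of_mem_erase h'), h⟩
  intro x hx y hy hxy
  by_contra hadj
  obtain ⟨p, hp, hpS, hpc⟩ :=
    Walk.exists_isPath_isChordless (exists_walk_through_reachAvoid hu hsep hmin' hx hy)
  obtain ⟨q, hq, hqS, hqc⟩ := Walk.exists_isPath_isChordless
    (exists_walk_through_reachAvoid hv (hsep ∘ .symm) (fun z hz => (hmin' z hz).symm) hy hx)
  have hcross : ∀ a b, ReachAvoid G S u a → ReachAvoid G S v b → ¬ G.Adj a b :=
    fun a b ha hb hab => hsep ((ha.concat hab hb.right_notMem).trans hb.symm)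
  have hdisj : p.support.tail.Disjoint q.support.tail := by
    intro w hwp hwq
    have hx' : x ∉ p.support.tail :=
      (List.nodup_cons.mp (p.cons_tail_support.symm ▸ hp.support_nodup)).1
    have hy' : y ∉ q.support.tail :=
      (List.nodup_cons.mp (q.cons_tail_support.symm ▸ hq.support_nodup)).1
    rcases hpS w (List.mem_of_mem_tail hwp) with rfl | rfl | hwu
    · exact hx' hwp
    · exact hy' hwq
    rcases hqS w (List.mem_of_mem_tail hwq) with rfl | rfl | hwv
    · exact hwu.right_notMem hy
    · exact hwu.right_notMem hx
    · exact hsep (hwu.trans hwv.symm)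
  have hpl := Walk.two_le_length_of_not_adj hxy hadj p
  have hql := Walk.two_le_length_of_not_adj hxy.symm (hadj ∘ .symm) q
  refine isChordal_iff.mp hG x _ (hp.isCycle_append hq hdisj (Or.inl hpl))
    (by rw [Walk.length_append]; omega) (hpc.append hqc fun a ha b hb hab => ?_)
  rcases hpS a ha with rfl | rfl | hau
  · exact Or.inl q.end_mem_support
  · exact Or.inl q.start_mem_support
  rcases hqS b hb with rfl | rfl | hbv
  · exact Or.inr p.end_mem_support
  · exact Or.inr p.start_mem_support
  · exact (hcross a b hau hbv hab).elim

end Chordal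

section CutOff

variable {V : Type}

def cutOff (I : SimpleGraph V) (D : Set V) (S : Finset V) : SimpleGraph V where
  Adj a b := I.Adj a b ∧ (a ∈ D → b ∈ D ∨ b ∈ S) ∧ (b ∈ D → a ∈ D ∨ a ∈ S)
  symm := ⟨fun _ _ h => ⟨h.1.symm, h.2.2, h.2.1⟩⟩
  loopless := ⟨fun a h => I.loopless.irrefl a h.1⟩

variable {I : SimpleGraph V} {D : Set V} {S : Finset V}

@[simp]
theorem cutOff_adj {a b : V} :
    (cutOff I D S).Adj a b ↔ I.Adj a b ∧ (a ∈ D → b ∈ D ∨ b ∈ S) ∧ (b ∈ D → a ∈ D ∨ a ∈ S) :=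
  Iff.rfl

theorem cutOff_le : cutOff I D S ≤ I := fun _ _ h => h.1

theorem le_cutOff {G : SimpleGraph V} (hGI : G ≤ I)
    (hD : ∀ a ∈ D, ∀ b, G.Adj a b → b ∈ D ∨ b ∈ S) : G ≤ cutOff I D S :=
  fun a b hab => cutOff_adj.mpr ⟨hGI hab, fun ha => hD a ha b hab, fun hb => hD b hb a hab.symm⟩

theorem exists_mem_support_cutOff {c d : V} (w : (cutOff I D S).Walk c d) (hc : c ∈ D)
    (hd : d ∉ D) : ∃ s ∈ w.support, s ∈ S ∧ s ∉ D := by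
  obtain ⟨e, he, he₁, he₂⟩ := w.exists_boundary_dart D hc hd
  exact ⟨e.snd, w.dart_snd_mem_support_of_mem_darts he,
    ((cutOff_adj.mp e.adj).2.1 he₁).resolve_left he₂, he₂⟩

/-- The cycle crosses `S` on both of its arcs between `a` and `b`, and these two crossings
form a chord. -/
theorem exists_chord_cutOff (hS : I.IsClique (S : Set V)) {v a b : V}
    {c : (cutOff I D S).Walk v v} (hc : c.IsCycle) (ha : a ∈ c.support) (hb : b ∈ c.support)
    (haD : a ∈ D) (hbD : b ∉ D) (hbS : b ∉ S) : ¬ c.IsChordless := by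
  classical
  obtain ⟨w₁, w₂, hcyc, hsupp, hedges⟩ := hc.exists_append_of_mem_support ha hb
  obtain ⟨x, hx, hxS, hxD⟩ := exists_mem_support_cutOff w₁ haD hbD
  obtain ⟨y, hy, hyS, hyD⟩ := exists_mem_support_cutOff w₂.reverse haD hbD
  rw [Walk.support_reverse, List.mem_reverse] at hy
  obtain ⟨hxy, hxye⟩ := hcyc.ne_and_notMem_edges_of_mem_support_append hx hy
    (ne_of_mem_of_not_mem haD hxD).symm (ne_of_mem_of_not_mem hxS hbS)
    (ne_of_mem_of_not_mem haD hyD).symm (ne_of_mem_of_not_mem hyS hbS)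
  intro hcl
  refine hxye ((hedges _).mpr (hcl.mem_edges ?_ ?_
    (cutOff_adj.mpr ⟨hS hxS hyS hxy, fun _ => Or.inr hyS, fun _ => Or.inr hxS⟩)))
  · exact (hsupp x).mp (Walk.mem_support_append_iff _ _ |>.mpr (Or.inl hx))
  · exact (hsupp y).mp (Walk.mem_support_append_iff _ _ |>.mpr (Or.inr hy))

theorem isChordal_cutOff (hI : IsChordal I) (hS : I.IsClique (S : Set V)) :
    IsChordal (cutOff I D S) := by
  rw [isChordal_iff] at hI ⊢
  intro v c hc hlen hcl
  refine hI v (c.mapLe cutOff_le) (hc.mapLe _) (by rwa [Walk.length_mapLe]) ?_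
  rw [Walk.isChordless_iff_forall_mem_edges, Walk.support_mapLe_eq_support,
    Walk.edges_mapLe_eq_edges]
  intro a b ha hb hab
  by_cases hab' : (cutOff I D S).Adj a b
  · exact hcl.mem_edges ha hb hab'
  simp only [cutOff_adj, hab, true_and, not_and_or, Classical.not_imp, not_or] at hab'
  rcases hab' with ⟨haD, hbD, hbS⟩ | ⟨hbD, haD, haS⟩
  · exact (exists_chord_cutOff hS hc ha hb haD hbD hbS hcl).elim
  · exact (exists_chord_cutOff hS hc hb ha hbD haD haS hcl).elim

end CutOff

/-- every minimal separator of a minimal triangulation `I` of `G`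
is a minimal separator of `G`. -/
theorem stmt8 {V : Type} (G I : SimpleGraph V) (hI : IsMinTriang G I)
    (S : Finset V) (hS : IsMinSep I S) : IsMinSep G S := by
  obtain ⟨⟨hGI, hIchordal⟩, hImin⟩ := hI
  have hclique := hS.isClique_of_isChordal hIchordal
  obtain ⟨u, v, huv, hnadj, ⟨hu, hv, hsep⟩, hmin⟩ := hS
  refine ⟨u, v, huv, fun h => hnadj (hGI h), ⟨hu, hv, fun h => hsep (h.mono hGI)⟩, ?_⟩
  rintro S' hS'S ⟨hu', hv', hsep'⟩
  obtain ⟨p, hp⟩ : ReachAvoid I S' u v := by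
    by_contra h
    exact hmin S' hS'S ⟨hu', hv', h⟩
  set D := {w | ReachAvoid G S' u w}
  have hle : G ≤ cutOff I D S' :=
    le_cutOff hGI fun a ha b hab => or_iff_not_imp_right.mpr (ha.concat hab)
  have hchordal : IsChordal (cutOff I D S') :=
    isChordal_cutOff hIchordal (hclique.subset (Finset.coe_subset.mpr hS'S.subset))
  have heq : cutOff I D S' = I := hImin _ ⟨hle, hchordal⟩ cutOff_le
  -- a `u`-`v` path in `I - S'` leaves `D` along an edge that `cutOff` deletes
  obtain ⟨d, hd, hd₁, hd₂⟩ := p.exists_boundary_dart D (ReachAvoid.refl hu') hsep'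
  have hd' : (cutOff I D S').Adj d.fst d.snd := by
    rw [heq]
    exact d.adj
  exact hp _ (p.dart_snd_mem_support_of_mem_darts hd)
    (((cutOff_adj.mp hd').2.1 hd₁).resolve_left hd₂)
end

section
/- For a finite set N with n elements and a function f : 2^N → ℤ, the zeta transform defined by f̂(Y) = Σ_{S ⊆ Y} f(S) can be computed for all Y ⊆ N simultaneously using O(2^n · n) ring additions (Yates's method / fast zeta transform): defining f_0 = f and f_j(Y) = f_{j−1}(Y) + [x_j ∈ Y] · f_{j−1}(Y \ {x_j}) for an enumeration x_1, …, x_n of N, one has f_n = f̂. -/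
/-!
Stage `j` of Yates's method has summed out the first `j` coordinates: `f_j(Y)` is the sum of
`f (T ∪ Y_{≥j})` over `T ⊆ Y_{<j}`. Passing from `j` to `j + 1` when `x = j` lies in `Y` is the
powerset splitting `∑_{T ⊆ A ∪ {x}} g T = ∑_{T ⊆ A} g T + ∑_{T ⊆ A} g (T ∪ {x})`, whose two halves
are `f_j(Y \ {x})` and `f_j(Y)`. At `j = n` the fixed part `Y_{≥n}` is empty.
-/

open scoped Classical

/-- The stages of Yates's fast zeta transform: `zetaSeq n f j` is `f_j`,
with `f_0 = f` and `f_j(Y) = f_{j-1}(Y) + [x_j ∈ Y]·f_{j-1}(Y \ {x_j})`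
for the enumeration `x_j = j - 1 : Fin n`. -/
def zetaSeq (n : ℕ) (f : Finset (Fin n) → ℤ) : ℕ → Finset (Fin n) → ℤ
  | 0 => f
  | j + 1 => fun Y =>
      if h : j < n then
        zetaSeq n f j Y +
          (if (⟨j, h⟩ : Fin n) ∈ Y then zetaSeq n f j (Y.erase ⟨j, h⟩) else 0)
      else zetaSeq n f j Y

namespace Fin

variable {n : ℕ} {x : Fin n} {Y : Finset (Fin n)}

lemma filter_val_lt_succ_of_mem (hx : x ∈ Y) :
    Y.filter (fun i => i.val < x.val + 1) = insert x (Y.filter fun i => i.val < x.val) := by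
  ext i
  obtain rfl | hi := eq_or_ne i x
  · simp [hx]
  · have : i.val ≠ x.val := val_ne_iff.2 hi
    simp only [Finset.mem_filter, Finset.mem_insert, hi, false_or]
    exact and_congr_right fun _ => by omega

lemma filter_val_lt_succ_of_notMem (hx : x ∉ Y) :
    Y.filter (fun i => i.val < x.val + 1) = Y.filter fun i => i.val < x.val := by
  ext i
  obtain rfl | hi := eq_or_ne i x
  · simp [hx]
  · have : i.val ≠ x.val := val_ne_iff.2 hi
    simp only [Finset.mem_filter]
    exact and_congr_right fun _ => by omega

lemma filter_le_val_of_mem (hx : x ∈ Y) :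
    Y.filter (fun i => x.val ≤ i.val) = insert x (Y.filter fun i => x.val + 1 ≤ i.val) := by
  ext i
  obtain rfl | hi := eq_or_ne i x
  · simp [hx]
  · have : i.val ≠ x.val := val_ne_iff.2 hi
    simp only [Finset.mem_filter, Finset.mem_insert, hi, false_or]
    exact and_congr_right fun _ => by omega

lemma filter_le_val_of_notMem (hx : x ∉ Y) :
    Y.filter (fun i => x.val ≤ i.val) = Y.filter fun i => x.val + 1 ≤ i.val := by
  ext i
  obtain rfl | hi := eq_or_ne i x
  · simp [hx]
  · have : i.val ≠ x.val := val_ne_iff.2 hi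
    simp only [Finset.mem_filter]
    exact and_congr_right fun _ => by omega

lemma filter_val_lt_erase (x : Fin n) (Y : Finset (Fin n)) :
    (Y.erase x).filter (fun i => i.val < x.val) = Y.filter fun i => i.val < x.val := by
  rw [Finset.filter_erase, Finset.erase_eq_of_notMem (by simp)]

lemma filter_le_val_erase (x : Fin n) (Y : Finset (Fin n)) :
    (Y.erase x).filter (fun i => x.val ≤ i.val) = Y.filter fun i => x.val + 1 ≤ i.val := by
  rw [filter_le_val_of_notMem (Finset.notMem_erase x Y), Finset.filter_erase,
    Finset.erase_eq_of_notMem (by simp)]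

end Fin

section ZetaTransform

variable {n : ℕ} (f : Finset (Fin n) → ℤ)

lemma zetaSeq_succ (x : Fin n) (Y : Finset (Fin n)) :
    zetaSeq n f (x + 1) Y =
      zetaSeq n f x Y + if x ∈ Y then zetaSeq n f x (Y.erase x) else 0 := by
  simp [zetaSeq]

theorem zetaSeq_eq_sum_powerset (j : ℕ) (hj : j ≤ n) (Y : Finset (Fin n)) :
    zetaSeq n f j Y = ∑ T ∈ (Y.filter fun i => i.val < j).powerset,
      f (T ∪ Y.filter fun i => j ≤ i.val) := by
  induction j generalizing Y with
  | zero => simp [zetaSeq]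
  | succ j ih =>
    obtain ⟨x, rfl⟩ : ∃ x : Fin n, x.val = j := ⟨⟨j, hj⟩, rfl⟩
    rw [zetaSeq_succ, ih x.isLt.le, ih x.isLt.le]
    by_cases hx : x ∈ Y
    · rw [if_pos hx, Fin.filter_val_lt_erase, Fin.filter_le_val_erase,
        Fin.filter_val_lt_succ_of_mem hx, Finset.sum_powerset_insert (by simp),
        Fin.filter_le_val_of_mem hx, add_comm]
      simp only [Finset.insert_union, Finset.union_insert]
    · rw [if_neg hx, add_zero, Fin.filter_val_lt_succ_of_notMem hx,
        Fin.filter_le_val_of_notMem hx]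

end ZetaTransform

/-- the fast zeta transform is correct: after `n` stages one
obtains the zeta transform `f̂(Y) = Σ_{S ⊆ Y} f(S)`. -/
theorem stmt15 (n : ℕ) (f : Finset (Fin n) → ℤ) (Y : Finset (Fin n)) :
    zetaSeq n f n Y = ∑ S ∈ Y.powerset, f S := by
  rw [zetaSeq_eq_sum_powerset f n le_rfl, Finset.filter_true_of_mem fun i _ => i.isLt,
    Finset.filter_false_of_mem fun i _ => not_le.2 i.isLt]
  simp only [Finset.union_empty]
end

section
/- Let G be a graph, S a minimal separator of G, and C a component of G − S. Then every edge of the realization R(S,C) that is not an edge of G[S ∪ C] joins two vertices of S; moreover, if I is any triangulation of G in which S is a clique, then every clique of I contained in S ∪ C is a clique of the graph I[S ∪ C], which is a triangulation of R(S,C). -/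
open scoped Classical

/-
Restriction to `W = S ∪ C` keeps every clique of `I` inside `W`, and `R(S,C) ≤ I[W]` because
`G ≤ I` and `S` is a clique of `I`. Chordality passes to induced subgraphs: a cycle of `I[W]`
is a cycle of `I` with all its vertices in `W`, so a chord of it in `I` is a chord in `I[W]`.
-/

section

variable {V : Type}

theorem restrict_adj {I : SimpleGraph V} {W : Finset V} {u v : V} :
    (restrict I W).Adj u v ↔ u ∈ W ∧ v ∈ W ∧ I.Adj u v := by
  simp only [restrict, SimpleGraph.fromRel_adj]
  constructor
  · rintro ⟨-, ⟨hu, hv, h⟩ | ⟨hv, hu, h⟩⟩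
    exacts [⟨hu, hv, h⟩, ⟨hu, hv, h.symm⟩]
  · rintro ⟨hu, hv, h⟩
    exact ⟨h.ne, Or.inl ⟨hu, hv, h⟩⟩

theorem restrict_le (I : SimpleGraph V) (W : Finset V) : restrict I W ≤ I :=
  fun _ _ h ↦ (restrict_adj.mp h).2.2

theorem SimpleGraph.IsClique.restrict {I : SimpleGraph V} {W Ω : Finset V}
    (h : I.IsClique (Ω : Set V)) (hΩ : (Ω : Set V) ⊆ W) : (restrict I W).IsClique (Ω : Set V) :=
  fun _ hx _ hy hxy ↦ restrict_adj.mpr ⟨hΩ hx, hΩ hy, h hx hy hxy⟩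

theorem mem_of_mem_support_restrict {I : SimpleGraph V} {W : Finset V} {u v x : V}
    {p : (restrict I W).Walk u v} (hp : ¬p.Nil) (hx : x ∈ p.support) : x ∈ W := by
  obtain ⟨e, he, hxe⟩ := (SimpleGraph.Walk.mem_support_iff_exists_mem_edges_of_not_nil hp).mp hx
  have hadj := p.edges_subset_edgeSet he
  induction e using Sym2.ind with
  | _ a b =>
    obtain ⟨ha, hb, -⟩ := restrict_adj.mp hadj
    rcases Sym2.mem_iff.mp hxe with rfl | rfl
    exacts [ha, hb]

theorem IsChordal.restrict {I : SimpleGraph V} (hI : IsChordal I) (W : Finset V) :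
    IsChordal (restrict I W) := by
  intro v p hp hlen
  have hle := restrict_le I W
  obtain ⟨u, w, hu, hw, hadj, hchord⟩ :=
    hI v (p.mapLe hle) (hp.mapLe hle) (by rwa [SimpleGraph.Walk.length_mapLe])
  rw [SimpleGraph.Walk.support_mapLe_eq_support] at hu hw
  rw [SimpleGraph.Walk.edges_mapLe_eq_edges] at hchord
  exact ⟨u, w, hu, hw, restrict_adj.mpr ⟨mem_of_mem_support_restrict hp.not_nil hu,
    mem_of_mem_support_restrict hp.not_nil hw, hadj⟩, hchord⟩

section Realization

variable [DecidableEq V] {G : SimpleGraph V} {S C : Finset V}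

theorem mem_of_real_adj_of_not_adj {u v : V} (h : (real G S C).Adj u v) (hG : ¬G.Adj u v) :
    u ∈ S ∧ v ∈ S := by
  simp only [real, SimpleGraph.fromRel_adj] at h
  rcases h with ⟨-, ⟨-, hG' | hS⟩ | ⟨-, hG' | hS⟩⟩
  exacts [absurd hG' hG, hS, absurd hG'.symm hG, hS.symm]

theorem real_le_restrict {I : SimpleGraph V} (hGI : G ≤ I) (hS : I.IsClique (S : Set V)) :
    real G S C ≤ restrict I (S ∪ C) := by
  intro u v h
  simp only [real, SimpleGraph.fromRel_adj] at h
  obtain ⟨hne, ⟨⟨hu, hv⟩, hadj⟩ | ⟨⟨hv, hu⟩, hadj⟩⟩ := h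
  · refine restrict_adj.mpr ⟨hu, hv, ?_⟩
    rcases hadj with hG | ⟨huS, hvS⟩
    exacts [hGI hG, hS huS hvS hne]
  · refine restrict_adj.mpr ⟨hu, hv, ?_⟩
    rcases hadj with hG | ⟨hvS, huS⟩
    exacts [(hGI hG).symm, hS huS hvS hne]

end Realization

end

theorem stmt18_general {V : Type} [DecidableEq V] (G : SimpleGraph V)
    (S : Finset V) (C : Finset V) :
    (∀ u v : V, (real G S C).Adj u v → ¬ G.Adj u v → u ∈ S ∧ v ∈ S) ∧
    (∀ I : SimpleGraph V, IsTriangulation G I → I.IsClique (S : Set V) →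
      (∀ Ω : Finset V, (Ω : Set V) ⊆ (S : Set V) ∪ (C : Set V) →
        I.IsClique (Ω : Set V) → (restrict I (S ∪ C)).IsClique (Ω : Set V)) ∧
      IsTriangulation (real G S C) (restrict I (S ∪ C))) := by
  refine ⟨fun u v ↦ mem_of_real_adj_of_not_adj, fun I ⟨hGI, hI⟩ hS ↦ ⟨?_, ?_⟩⟩
  · intro Ω hΩ hclique
    exact hclique.restrict (by rwa [Finset.coe_union])
  · exact ⟨real_le_restrict hGI hS, hI.restrict _⟩

/-- every edge of `R(S,C)` that is not an edge of `G` joins two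
vertices of `S`; moreover, if `I` is a triangulation of `G` in which `S` is a
clique, then every clique of `I` contained in `S ∪ C` is a clique of
`I[S ∪ C]`, and `I[S ∪ C]` is a triangulation of `R(S,C)`. -/
theorem stmt18 {V : Type} [DecidableEq V] (G : SimpleGraph V)
    (S : Finset V) (hS : IsMinSep G S) (C : Finset V) (hC : IsCompAvoid G S C) :
    (∀ u v : V, (real G S C).Adj u v → ¬ G.Adj u v → u ∈ S ∧ v ∈ S) ∧
    (∀ I : SimpleGraph V, IsTriangulation G I → I.IsClique (S : Set V) →
      (∀ Ω : Finset V, (Ω : Set V) ⊆ (S : Set V) ∪ (C : Set V) →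
        I.IsClique (Ω : Set V) → (restrict I (S ∪ C)).IsClique (Ω : Set V)) ∧
      IsTriangulation (real G S C) (restrict I (S ∪ C))) :=
  stmt18_general G S C
end
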